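/- Let Z be an (X_D,M)-safely reachable zone, v ∈ Z, n = max(1,|X_D|), and x,y ∈ X_F ∪ {0}. If -∞ < v(x) - v(y) < -nM then, for every α ∈ ℝ with -∞ < α < -nM, there exists a valuation v' ∈ Z with v'(x) - v'(y) = α. -/
import Mathlib


noncomputable section

open Classical

attribute [local instance] Classical.propDecidable

namespace GTA

/-- A comparison operator: strict `<` or non-strict `≤`. -/
inductive Cmp where
  | lt : Cmp
  | le : Cmp
deriving DecidableEq

/-- `Cmp.holds ◁ a b` means `a ◁ b` in `ℝ̄ = EReal`. -/
def Cmp.holds : Cmp → EReal → EReal → Prop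
  | .lt, a, b => a < b
  | .le, a, b => a ≤ b

/-- Extended addition on `ℝ̄`: `(+∞) + α = α + (+∞) = +∞` for all `α`,
and `(-∞) + β = β + (-∞) = -∞` for `β ≠ +∞`. -/
def eadd (a b : EReal) : EReal := if a = ⊤ ∨ b = ⊤ then ⊤ else a + b

/-- Extended subtraction `β - α := β + (-α)`. -/
def esub (a b : EReal) : EReal := eadd a (-b)

/-- Constants of atomic constraints: elements of `ℤ ∪ {-∞, +∞}`. -/
inductive EConst where
  | ninf : EConst
  | int : ℤ → EConst
  | pinf : EConst
deriving DecidableEq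

def EConst.toEReal : EConst → EReal
  | .ninf => ⊥
  | .int k => ((k : ℝ) : EReal)
  | .pinf => ⊤

variable {C : Type*}

/-- A valuation over the clock set `C` (vertices `Option C`, where `none` is the
special clock `0`), with future clocks `XF` and history clocks the complement of `XF`:
`v 0 = 0`, history clocks take values in `[0, +∞]`, future clocks in `[-∞, 0]`. -/
structure Val (C : Type*) (XF : Set C) where
  toFun : Option C → EReal
  zero' : toFun none = 0
  hist' : ∀ x : C, x ∉ XF → 0 ≤ toFun (some x)
  fut' : ∀ x : C, x ∈ XF → toFun (some x) ≤ 0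

/-- Shift of a clock map by a real delay `δ`: every clock in `X` increases by `δ`,
the special clock `0` keeps value `0`. -/
def shift (u : Option C → EReal) (δ : ℝ) : Option C → EReal
  | none => 0
  | some x => eadd (u (some x)) ((δ : ℝ) : EReal)

/-- An atomic constraint `y - x ◁ c` with `x, y ∈ X ∪ {0}` and `c ∈ ℤ ∪ {-∞,+∞}`. -/
structure Atom (C : Type*) where
  y : Option C
  x : Option C
  cmp : Cmp
  c : EConst

/-- Satisfaction `u ⊨ y - x ◁ c`, i.e. `u(y) - u(x) ◁ c` with extended subtraction. -/
def asat (u : Option C → EReal) (φ : Atom C) : Prop :=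
  φ.cmp.holds (esub (u φ.y) (u φ.x)) φ.c.toEReal

/-- The simulation preorder `≼_G` on clock maps: for every `φ ∈ G` and every real
`δ ≥ 0`, `u + δ ⊨ φ` implies `u' + δ ⊨ φ`. -/
def simLeFun (G : Set (Atom C)) (u u' : Option C → EReal) : Prop :=
  ∀ φ ∈ G, ∀ δ : ℝ, 0 ≤ δ → asat (shift u δ) φ → asat (shift u' δ) φ

/-- `v ≼_G v'` on valuations. -/
def simLe (XF : Set C) (G : Set (Atom C)) (v v' : Val C XF) : Prop :=
  simLeFun G v.toFun v'.toFun

/-- `v' ∈ [R]v`: history clocks in `R` are reset to `0`, future clocks in `R` are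
released (any value in `[-∞,0]`, automatic for valuations), other clocks unchanged. -/
def releaseRel (XF : Set C) (R : Set C) (v v' : Val C XF) : Prop :=
  (∀ x ∈ R, x ∉ XF → v'.toFun (some x) = 0) ∧
  ∀ x : C, x ∉ R → v'.toFun (some x) = v.toFun (some x)

/-- `[R]Z`. -/
def changeSet (XF : Set C) (R : Set C) (Z : Set (Val C XF)) : Set (Val C XF) :=
  { v' | ∃ v ∈ Z, releaseRel XF R v v' }

/-- Time elapse `↑Z = {v + δ : v ∈ Z, δ ≥ 0, (v+δ)(x) ≤ 0 for all future x}`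
(the latter condition is automatic since elements are valuations). -/
def elapseSet (XF : Set C) (Z : Set (Val C XF)) : Set (Val C XF) :=
  { w | ∃ v ∈ Z, ∃ δ : ℝ, 0 ≤ δ ∧ w.toFun = shift v.toFun δ }

/-- Membership of a vertex in a set of clocks (the clock `0` is in no such set). -/
def inR (R : Set C) : Option C → Prop
  | none => False
  | some x => x ∈ R

/-- `pre([R])(G)`. -/
def preChange (R : Set C) (G : Set (Atom C)) : Set (Atom C) :=
  { ψ | ∃ φ ∈ G,
      (¬ inR R φ.x ∧ ¬ inR R φ.y ∧ ψ = φ) ∨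
      (inR R φ.x ∧ ¬ inR R φ.y ∧ ψ = { φ with x := none }) ∨
      (¬ inR R φ.x ∧ inR R φ.y ∧ ψ = { φ with y := none }) }

/-- Instantaneous timed programs: guards (finite conjunctions of atomic constraints),
changes `[R]`, and sequential composition. -/
inductive Prog (C : Type*) where
  | guard : List (Atom C) → Prog C
  | change : Set C → Prog C
  | seq : Prog C → Prog C → Prog C

/-- Semantics `v →prog v'` of programs. -/
def Prog.steps (XF : Set C) : Prog C → Val C XF → Val C XF → Prop
  | .guard g, v, v' => (∀ φ ∈ g, asat v.toFun φ) ∧ v' = v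
  | .change R, v, v' => releaseRel XF R v v'
  | .seq p q, v, v' => ∃ u, Prog.steps XF p v u ∧ Prog.steps XF q u v'

/-- `pre(prog)(G)`. -/
def Prog.pre : Prog C → Set (Atom C) → Set (Atom C)
  | .guard g, G => { φ | φ ∈ g } ∪ G
  | .change R, G => preChange R G
  | .seq p q, G => Prog.pre p (Prog.pre q G)

/-- A weight `(◁, c)` with `c ∈ ℝ̄`. -/
structure Weight where
  cmp : Cmp
  c : EReal

/-- Strict order on weights. -/
def Weight.lt (w w' : Weight) : Prop :=
  w.c < w'.c ∨ (w.c = w'.c ∧ w.cmp = Cmp.lt ∧ w'.cmp = Cmp.le)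

/-- Non-strict order on weights. -/
def Weight.le (w w' : Weight) : Prop := Weight.lt w w' ∨ w = w'

/-- Sum of weights. -/
def Weight.add (w w' : Weight) : Weight :=
  if w = ⟨Cmp.lt, ⊥⟩ ∨ w' = ⟨Cmp.lt, ⊥⟩ then ⟨Cmp.lt, ⊥⟩
  else if w = ⟨Cmp.le, ⊤⟩ ∨ w' = ⟨Cmp.le, ⊤⟩ then ⟨Cmp.le, ⊤⟩
  else if w = ⟨Cmp.le, ⊥⟩ ∨ w' = ⟨Cmp.le, ⊥⟩ then ⟨Cmp.le, ⊥⟩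
  else if w = ⟨Cmp.lt, ⊤⟩ ∨ w' = ⟨Cmp.lt, ⊤⟩ then ⟨Cmp.lt, ⊤⟩
  else ⟨if w.cmp = Cmp.le ∧ w'.cmp = Cmp.le then Cmp.le else Cmp.lt, w.c + w'.c⟩

/-- Minimum of two weights. -/
def Weight.min (w w' : Weight) : Weight := if Weight.le w w' then w else w'

/-- A weight `(◁, c)` is finite if `c ∈ ℝ`. -/
def Weight.Finite (w : Weight) : Prop := w.c ≠ ⊥ ∧ w.c ≠ ⊤

/-- A distance graph: a weight on each ordered pair of distinct vertices of
`X ∪ {0}`; self-loops carry the trivial weight `(≤, +∞)`. -/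
structure DGraph (C : Type*) where
  w : Option C → Option C → Weight
  refl' : ∀ a : Option C, w a a = ⟨Cmp.le, ⊤⟩

namespace DGraph

/-- A well-formed distance graph has no edge of weight `(<, -∞)`. -/
def WF (G : DGraph C) : Prop := ∀ a b, G.w a b ≠ ⟨Cmp.lt, ⊥⟩

/-- The semantics `⟦𝔾⟧` of a distance graph. -/
def sem (G : DGraph C) (XF : Set C) : Set (Val C XF) :=
  { v | ∀ a b : Option C, (G.w a b).cmp.holds (esub (v.toFun b) (v.toFun a)) (G.w a b).c }

/-- Weight of the path `a₀ → a₁ → ⋯ → aₙ` given as the list `[a₀, …, aₙ]`. -/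
def chainWeight (G : DGraph C) : List (Option C) → Weight
  | a :: b :: l => Weight.add (G.w a b) (G.chainWeight (b :: l))
  | _ => ⟨Cmp.le, 0⟩

end DGraph

/-- `l` is a path from `a` to `b`: at least one edge, consecutive vertices distinct. -/
def IsPath (l : List (Option C)) (a b : Option C) : Prop :=
  2 ≤ l.length ∧ l.head? = some a ∧ l.getLast? = some b ∧ l.Chain' (· ≠ ·)

namespace DGraph

/-- `𝔾` has a negative cycle: a cycle of weight strictly less than `(≤, 0)`. -/
def HasNegCycle (G : DGraph C) : Prop :=
  ∃ (a : Option C) (l : List (Option C)),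
    IsPath l a a ∧ Weight.lt (G.chainWeight l) ⟨Cmp.le, 0⟩

/-- `𝔾` is in standard form. -/
def Standard (G : DGraph C) (XF : Set C) : Prop :=
  (∀ x ∈ XF, Weight.le (G.w none (some x)) ⟨Cmp.le, 0⟩) ∧
  (∀ x : C, x ∉ XF → Weight.le (G.w (some x) none) ⟨Cmp.le, 0⟩) ∧
  (∀ x y : C, G.w (some x) (some y) ≠ ⟨Cmp.le, ⊤⟩ →
    G.w (some x) none ≠ ⟨Cmp.le, ⊤⟩ ∧ G.w none (some y) ≠ ⟨Cmp.le, ⊤⟩)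

/-- `𝔾` is normalized: standard form, no negative cycle, and every edge weight is
minimal among the weights of paths between its endpoints. -/
def Normalized (G : DGraph C) (XF : Set C) : Prop :=
  G.Standard XF ∧ ¬ G.HasNegCycle ∧
  ∀ (a b : Option C) (l : List (Option C)), a ≠ b → IsPath l a b →
    Weight.le (G.w a b) (G.chainWeight l)

/-- Weight function of the standardization of `𝔾`. -/
def stdW (G : DGraph C) (XF : Set C) : Option C → Option C → Weight
  | none, some y =>
      if y ∈ XF then Weight.min (G.w none (some y)) ⟨Cmp.le, 0⟩
      else if ∃ a : Option C, a ≠ some y ∧ G.w a (some y) ≠ ⟨Cmp.le, ⊤⟩ then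
        Weight.min (G.w none (some y)) ⟨Cmp.lt, ⊤⟩
      else G.w none (some y)
  | some x, none =>
      if x ∈ XF then
        (if ∃ b : Option C, b ≠ some x ∧ G.w (some x) b ≠ ⟨Cmp.le, ⊤⟩ then
          Weight.min (G.w (some x) none) ⟨Cmp.lt, ⊤⟩
        else G.w (some x) none)
      else Weight.min (G.w (some x) none) ⟨Cmp.le, 0⟩
  | a, b => G.w a b

/-- The standardization of a distance graph. -/
def standardize (G : DGraph C) (XF : Set C) : DGraph C where
  w := G.stdW XF
  refl' := fun a => by
    cases a with
    | none => exact G.refl' none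
    | some x => exact G.refl' (some x)

/-- Intersecting a distance graph with a single atomic constraint `y - x ◁ c`:
the weight of the edge `x → y` is replaced by `min(𝔾_{xy}, (◁, c))`. -/
def addAtom (G : DGraph C) (φ : Atom C) : DGraph C where
  w := fun a b =>
    if a = φ.x ∧ b = φ.y ∧ φ.x ≠ φ.y then
      Weight.min (G.w a b) ⟨φ.cmp, φ.c.toEReal⟩
    else G.w a b
  refl' := fun a => by
    have h : ¬ (a = φ.x ∧ a = φ.y ∧ φ.x ≠ φ.y) := by
      rintro ⟨h1, h2, h3⟩
      exact h3 (h1 ▸ h2 ▸ rfl)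
    show (if a = φ.x ∧ a = φ.y ∧ φ.x ≠ φ.y then
      Weight.min (G.w a a) ⟨φ.cmp, φ.c.toEReal⟩ else G.w a a) = ⟨Cmp.le, ⊤⟩
    rw [if_neg h]
    exact G.refl' a

/-- Intersecting a distance graph with a guard (list of atomic constraints). -/
def guardGraph (G : DGraph C) : List (Atom C) → DGraph C
  | [] => G
  | φ :: g => (G.guardGraph g).addAtom φ

/-- Edgewise minimum of two distance graphs. -/
def minG (G H : DGraph C) : DGraph C where
  w := fun a b => Weight.min (G.w a b) (H.w a b)
  refl' := fun a => by
    show Weight.min (G.w a a) (H.w a a) = _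
    rw [G.refl', H.refl']
    exact ite_self _

end DGraph

/-- The distance graph `𝔾_v^G`. -/
def upGraph (XF : Set C) (G : Set (Atom C)) (v : Val C XF) : DGraph C where
  w := fun a b =>
    match a, b with
    | some x, none =>
        if x ∈ XF then ⟨Cmp.le, -(v.toFun (some x))⟩
        else if ∃ φ ∈ G, φ.y = none ∧ φ.x = some x ∧ φ.c ≠ EConst.ninf ∧ ¬ asat v.toFun φ
          then ⟨Cmp.le, -(v.toFun (some x))⟩
        else ⟨Cmp.le, ⊤⟩
    | none, some y =>
        if y ∈ XF then ⟨Cmp.le, v.toFun (some y)⟩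
        else if ∃ φ ∈ G, φ.y = some y ∧ φ.x = none ∧ φ.c ≠ EConst.pinf ∧ asat v.toFun φ
          then ⟨Cmp.le, v.toFun (some y)⟩
        else ⟨Cmp.le, ⊤⟩
    | _, _ => ⟨Cmp.le, ⊤⟩
  refl' := fun a => by cases a <;> rfl

/-- The guard `g_v^G`: all constraints of `G` satisfied by `v`. -/
def upGuard (G : Set (Atom C)) (u : Option C → EReal) : Set (Atom C) :=
  { φ ∈ G | asat u φ }

/-- An atomic constraint is `M`-bounded. -/
def MBounded (M : ℕ) (φ : Atom C) : Prop :=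
  (∃ k : ℤ, φ.c = EConst.int k ∧ -(M : ℤ) ≤ k ∧ k ≤ (M : ℤ)) ∨
  (φ.cmp = Cmp.le ∧ φ.c = EConst.ninf) ∨ φ.c = EConst.pinf

/-- An atomic constraint is `M`-bounded integral (constant in `{-∞,+∞} ∪ [-M, M] ∩ ℤ`). -/
def MBoundedIntegral (M : ℕ) (φ : Atom C) : Prop :=
  (∃ k : ℤ, φ.c = EConst.int k ∧ -(M : ℤ) ≤ k ∧ k ≤ (M : ℤ)) ∨
  φ.c = EConst.ninf ∨ φ.c = EConst.pinf

/-- An atomic constraint is `X_D`-safe: if both endpoints are future clocks,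
they are in `X_D`. -/
def XDSafe (XF XD : Set C) (φ : Atom C) : Prop :=
  ∀ x y : C, φ.x = some x → φ.y = some y → x ∈ XF → y ∈ XF → x ∈ XD ∧ y ∈ XD

/-- Vertices in `X_F ∪ {0}`. -/
def futV (XF : Set C) : Option C → Prop
  | none => True
  | some x => x ∈ XF

/-- Vertices in `X_H ∪ {0}`. -/
def histV (XF : Set C) : Option C → Prop
  | none => True
  | some x => x ∉ XF

/-- The equivalence `v₁ ≃ v₂`: agreement on history clocks and on all
`(X_D, M)`-safe constraints over `X_F ∪ {0}`. -/
def simeqV (XF XD : Set C) (M : ℕ) (v₁ v₂ : Val C XF) : Prop :=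
  (∀ x : C, x ∉ XF → v₁.toFun (some x) = v₂.toFun (some x)) ∧
  ∀ φ : Atom C, XDSafe XF XD φ → MBounded M φ → futV XF φ.x → futV XF φ.y →
    (asat v₁.toFun φ ↔ asat v₂.toFun φ)

/-- `(X_D, M)`-safely reachable zones: obtained from the initial zone
`↑(𝕍 ∧ g₀)` (`g₀` fixing each history clock to `0` or `+∞`) by the
`(X_D, M)`-safe zone operations. -/
inductive SafeReach (XF XD : Set C) (M : ℕ) : Set (Val C XF) → Prop where
  | init (f : C → EReal) (hf : ∀ x : C, x ∉ XF → f x = 0 ∨ f x = ⊤) :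
      SafeReach XF XD M (elapseSet XF { v | ∀ x : C, x ∉ XF → v.toFun (some x) = f x })
  | guard {Z : Set (Val C XF)} (g : Set (Atom C))
      (hg : ∀ φ ∈ g, XDSafe XF XD φ ∧ MBounded M φ)
      (h : SafeReach XF XD M Z) :
      SafeReach XF XD M { v ∈ Z | ∀ φ ∈ g, asat v.toFun φ }
  | changeSimple {Z : Set (Val C XF)} (x : C) (hx : x ∉ XD) (h : SafeReach XF XD M Z) :
      SafeReach XF XD M (changeSet XF {x} Z)
  | changeD {Z : Set (Val C XF)} (x : C) (hx : x ∈ XD) (c : EReal) (hc : c = 0 ∨ c = ⊥)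
      (h : SafeReach XF XD M Z) :
      SafeReach XF XD M (changeSet XF {x} { v ∈ Z | v.toFun (some x) = c })
  | elapse {Z : Set (Val C XF)} (h : SafeReach XF XD M Z) :
      SafeReach XF XD M (elapseSet XF Z)

/-- `α ∼_K β` on `ℝ̄`. -/
def eqvK (K : ℕ) (α β : EReal) : Prop :=
  ∀ (cmp : Cmp) (c : EReal),
    (c = ⊥ ∨ c = ⊤ ∨ ∃ k : ℤ, c = ((k : ℝ) : EReal) ∧ |k| ≤ (K : ℤ)) →
    (cmp.holds α c ↔ cmp.holds β c)

/-- The equivalence `v ∼ⁿ_M v'` on valuations. -/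
def simVn (XF : Set C) (M n : ℕ) (v v' : Val C XF) : Prop :=
  (∀ x : C, eqvK (n * M) (v.toFun (some x)) (v'.toFun (some x))) ∧
  ∀ x y : C, eqvK ((n + 1) * M)
    (esub (v.toFun (some x)) (v.toFun (some y)))
    (esub (v'.toFun (some x)) (v'.toFun (some y)))

/-- The `(†)` conditions for a distance graph with bound `B` (usually `B = nM`). -/
def Dagger (XF : Set C) (B : ℕ) (G : DGraph C) : Prop :=
  (∀ x ∈ XF, (∃ b : Option C, histV XF b ∧ (G.w (some x) b).Finite) →
     Weight.le ⟨Cmp.le, 0⟩ (G.w (some x) none) ∧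
     Weight.le (G.w (some x) none) ⟨Cmp.le, ((B : ℝ) : EReal)⟩) ∧
  (∀ x ∈ XF, (G.w none (some x)).Finite →
     Weight.le ⟨Cmp.lt, ((-(B : ℝ) : ℝ) : EReal)⟩ (G.w none (some x)) ∧
     Weight.le (G.w none (some x)) ⟨Cmp.le, 0⟩) ∧
  (∀ x : C, x ∉ XF → ∀ y ∈ XF, (G.w none (some y)).Finite →
     Weight.le (Weight.add (G.w (some x) none) ⟨Cmp.lt, ((-(B : ℝ) : ℝ) : EReal)⟩)
       (G.w (some x) (some y))) ∧
  (∀ x ∈ XF, ∀ y ∈ XF, (G.w (some x) (some y)).Finite →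
     Weight.le ⟨Cmp.lt, ((-(B : ℝ) : ℝ) : EReal)⟩ (G.w (some x) (some y)) ∧
     Weight.le (G.w (some x) (some y)) ⟨Cmp.le, ((B : ℝ) : EReal)⟩)

end GTA

namespace GTA

variable {C : Type*}

/-! ### EReal helpers -/

lemma eadd_coe_coe (x y : ℝ) : eadd (x:EReal) (y:EReal) = ((x + y : ℝ) : EReal) := by
  unfold eadd
  rw [if_neg]
  · exact_mod_cast rfl
  · rintro (h | h)
    · exact EReal.coe_ne_top x h
    · exact EReal.coe_ne_top y h

lemma eadd_bot_coe (y : ℝ) : eadd ⊥ (y:EReal) = ⊥ := by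
  unfold eadd
  rw [if_neg]
  · exact EReal.bot_add _
  · rintro (h | h)
    · simp at h
    · exact EReal.coe_ne_top y h

lemma eadd_top (y : EReal) : eadd ⊤ y = ⊤ := by
  unfold eadd; rw [if_pos (Or.inl rfl)]

lemma esub_coe_coe (x y : ℝ) : esub (x:EReal) (y:EReal) = ((x - y : ℝ) : EReal) := by
  unfold esub
  rw [show -(y:EReal) = ((-y:ℝ):EReal) by exact_mod_cast rfl, eadd_coe_coe]
  exact_mod_cast congrArg (fun t : ℝ => (t:EReal)) (sub_eq_add_neg x y).symm

lemma esub_bot_right (x : EReal) : esub x ⊥ = ⊤ := by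
  unfold esub eadd
  rw [if_pos (Or.inr EReal.neg_bot)]

lemma esub_top_left (y : EReal) : esub ⊤ y = ⊤ := eadd_top _

lemma esub_bot_coe (y : ℝ) : esub ⊥ (y:EReal) = ⊥ := by
  unfold esub
  rw [show -(y:EReal) = ((-y:ℝ):EReal) by exact_mod_cast rfl, eadd_bot_coe]

lemma esub_coe_top (x : ℝ) : esub (x:EReal) ⊤ = ⊥ := by
  unfold esub eadd
  rw [if_neg, EReal.neg_top, EReal.add_bot]
  rintro (h | h)
  · exact EReal.coe_ne_top x h
  · rw [EReal.neg_top] at h; simp at h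

lemma ereal_le_zero_cases {x : EReal} (hx : x ≤ 0) : x = ⊥ ∨ ∃ r : ℝ, x = (r:EReal) ∧ r ≤ 0 := by
  induction x using EReal.rec with
  | bot => left; rfl
  | coe r => right; exact ⟨r, rfl, by exact_mod_cast hx⟩
  | top => exact absurd hx (by simp)

/-! ### categories -/

/-- Two real differences are `M`-equivalent: equal, or both below `-M`, or both above `M`. -/
def catEq (M : ℕ) (d d' : ℝ) : Prop :=
  d = d' ∨ (d < -(M:ℝ) ∧ d' < -(M:ℝ)) ∨ ((M:ℝ) < d ∧ (M:ℝ) < d')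

lemma catEq_neg {M : ℕ} {d d' : ℝ} (h : catEq M d d') : catEq M (-d) (-d') := by
  rcases h with rfl | ⟨h1, h2⟩ | ⟨h1, h2⟩
  · left; rfl
  · right; right; constructor <;> linarith
  · right; left; constructor <;> linarith

lemma catEq_transfer {M : ℕ} {d d' : ℝ} (h : catEq M d d') {cmp : Cmp} {c : EConst}
    (hb : (∃ k : ℤ, c = .int k ∧ -(M:ℤ) ≤ k ∧ k ≤ (M:ℤ)) ∨ (cmp = .le ∧ c = .ninf) ∨ c = .pinf) :
    cmp.holds (d:EReal) c.toEReal ↔ cmp.holds (d':EReal) c.toEReal := by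
  rcases h with rfl | ⟨h1, h2⟩ | ⟨h1, h2⟩
  · rfl
  · rcases hb with ⟨k, rfl, hk1, hk2⟩ | ⟨rfl, rfl⟩ | rfl
    · have hk1' : -(M:ℝ) ≤ (k:ℝ) := by exact_mod_cast hk1
      have hd : d < (k:ℝ) := lt_of_lt_of_le h1 hk1'
      have hd' : d' < (k:ℝ) := lt_of_lt_of_le h2 hk1'
      cases cmp <;> simp only [Cmp.holds, EConst.toEReal] <;>
        constructor <;> intro _
      · exact_mod_cast hd'
      · exact_mod_cast hd
      · exact le_of_lt (by exact_mod_cast hd')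
      · exact le_of_lt (by exact_mod_cast hd)
    · simp only [Cmp.holds, EConst.toEReal]
      constructor <;> intro hh
      · exact absurd hh (by simp)
      · exact absurd hh (by simp)
    · cases cmp <;> simp only [Cmp.holds, EConst.toEReal]
      · constructor <;> intro _ <;> exact EReal.coe_lt_top _
      · constructor <;> intro _ <;> exact le_top
  · rcases hb with ⟨k, rfl, hk1, hk2⟩ | ⟨rfl, rfl⟩ | rfl
    · have hk2' : (k:ℝ) ≤ (M:ℝ) := by exact_mod_cast hk2
      have hd : (k:ℝ) < d := lt_of_le_of_lt hk2' h1
      have hd' : (k:ℝ) < d' := lt_of_le_of_lt hk2' h2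
      cases cmp <;> simp only [Cmp.holds, EConst.toEReal]
      · exact iff_of_false (by exact_mod_cast not_lt.mpr (le_of_lt hd))
          (by exact_mod_cast not_lt.mpr (le_of_lt hd'))
      · exact iff_of_false (by exact_mod_cast not_le.mpr hd)
          (by exact_mod_cast not_le.mpr hd')
    · simp only [Cmp.holds, EConst.toEReal]
      constructor <;> intro hh <;> exact absurd hh (by simp)
    · cases cmp <;> simp only [Cmp.holds, EConst.toEReal]
      · constructor <;> intro _ <;> exact EReal.coe_lt_top _
      · constructor <;> intro _ <;> exact le_top

end GTA
namespace GTA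

variable {C : Type*}

lemma esub_bot_left {y : EReal} (hy : y ≠ ⊥) : esub ⊥ y = ⊥ := by
  unfold esub eadd
  rw [if_neg, EReal.bot_add]
  rintro (h | h)
  · simp at h
  · exact hy (by simpa using congrArg (fun t => -t) h)

lemma ereal_cases (x : EReal) : x = ⊥ ∨ x = ⊤ ∨ ∃ r : ℝ, x = (r:EReal) := by
  induction x using EReal.rec with
  | bot => exact Or.inl rfl
  | coe r => exact Or.inr (Or.inr ⟨r, rfl⟩)
  | top => exact Or.inr (Or.inl rfl)

/-- A legal move: `v'` agrees with `v` outside `S ⊆ X_F`; clocks in `S` keep `⊥`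
values, and real values stay deep (`< -M`), preserving `M`-categories of differences
with every real-valued clock of `X_D`. -/
structure Mv (XF XD : Set C) (M : ℕ) (v v' : Val C XF) (S : Set C) : Prop where
  sub : S ⊆ XF
  off : ∀ x : C, x ∉ S → v'.toFun (some x) = v.toFun (some x)
  bot : ∀ z ∈ S, v.toFun (some z) = ⊥ → v'.toFun (some z) = ⊥
  real : ∀ z ∈ S, ∀ r : ℝ, v.toFun (some z) = (r:EReal) →
    ∃ r' : ℝ, v'.toFun (some z) = (r':EReal) ∧ r < -(M:ℝ) ∧ r' < -(M:ℝ)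
  cat : ∀ z ∈ S, z ∈ XD → ∀ w : C, w ∈ XD → ∀ r rw r' rw' : ℝ,
    v.toFun (some z) = (r:EReal) → v.toFun (some w) = (rw:EReal) →
    v'.toFun (some z) = (r':EReal) → v'.toFun (some w) = (rw':EReal) →
    catEq M (r - rw) (r' - rw')

lemma vertex_class {XF XD : Set C} {M : ℕ} {v v' : Val C XF} {S : Set C}
    (hmv : Mv XF XD M v v' S) (e : Option C) :
    ((e = none ∨ ∃ z, e = some z ∧ z ∉ S) ∧ v'.toFun e = v.toFun e) ∨
    ∃ z, e = some z ∧ z ∈ S ∧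
      ((v.toFun e = ⊥ ∧ v'.toFun e = ⊥) ∨
       ∃ r r' : ℝ, v.toFun e = (r:EReal) ∧ v'.toFun e = (r':EReal) ∧
         r < -(M:ℝ) ∧ r' < -(M:ℝ)) := by
  cases e with
  | none => exact Or.inl ⟨Or.inl rfl, by rw [v.zero', v'.zero']⟩
  | some z =>
    by_cases hz : z ∈ S
    · refine Or.inr ⟨z, rfl, hz, ?_⟩
      rcases ereal_le_zero_cases (v.fut' z (hmv.sub hz)) with h | ⟨r, hr, _⟩
      · exact Or.inl ⟨h, hmv.bot z hz h⟩
      · obtain ⟨r', hr', h1, h2⟩ := hmv.real z hz r hr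
        exact Or.inr ⟨r, r', hr, hr', h1, h2⟩
    · exact Or.inl ⟨Or.inr ⟨z, rfl, hz⟩, hmv.off z hz⟩

lemma pattern {XF XD : Set C} {M : ℕ} {v v' : Val C XF} {S : Set C}
    (hmv : Mv XF XD M v v' S) (φ : Atom C) (hsafe : XDSafe XF XD φ) (hbdd : MBounded M φ)
    (hsat : asat v.toFun φ) : asat v'.toFun φ := by
  have key : esub (v'.toFun φ.y) (v'.toFun φ.x) = esub (v.toFun φ.y) (v.toFun φ.x) ∨
      ∃ d d' : ℝ, esub (v.toFun φ.y) (v.toFun φ.x) = (d:EReal) ∧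
        esub (v'.toFun φ.y) (v'.toFun φ.x) = (d':EReal) ∧ catEq M d d' := by
    rcases vertex_class hmv φ.x with ⟨hxk, hxv⟩ | ⟨zx, hex, hzxS, hx⟩
    · -- x vertex unmoved
      rcases vertex_class hmv φ.y with ⟨hyk, hyv⟩ | ⟨zy, hey, hzyS, hy⟩
      · left; rw [hxv, hyv]
      · rcases hy with ⟨hy1, hy2⟩ | ⟨r, r', hr, hr', hrM, hr'M⟩
        · -- y is ⊥ on both sides
          rcases eq_or_ne (v.toFun φ.x) ⊥ with hxbot | hxbot
          · left; rw [hxv, hxbot, hy1, hy2]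
          · left; rw [hxv, hy1, hy2]
        · -- y real on both sides
          rcases ereal_cases (v.toFun φ.x) with hxbot | hxtop | ⟨s, hs⟩
          · left; rw [hxv, hxbot, esub_bot_right, esub_bot_right]
          · left; rw [hxv, hxtop, hr, hr', esub_coe_top, esub_coe_top]
          · refine Or.inr ⟨r - s, r' - s, ?_, ?_, ?_⟩
            · rw [hr, hs, esub_coe_coe]
            · rw [hr', hxv, hs, esub_coe_coe]
            · -- catEq M (r - s) (r' - s), by kind of the x vertex
              rcases hxk with hxnone | ⟨w, hw, hwS⟩
              · have hs0 : s = 0 := by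
                  rw [hxnone, v.zero'] at hs
                  exact_mod_cast hs.symm
                right; left; constructor <;> linarith
              · by_cases hwXF : w ∈ XF
                · have hzyXF : zy ∈ XF := hmv.sub hzyS
                  obtain ⟨hwXD, hzyXD⟩ := hsafe w zy hw hey hwXF hzyXF
                  exact hmv.cat zy hzyS hzyXD w hwXD r s r' s
                    (hey ▸ hr) (hw ▸ hs) (hey ▸ hr') (by rw [← hw, hxv, hs])
                · have hs0 : (0:EReal) ≤ (s:EReal) := by rw [← hs, hw]; exact v.hist' w hwXF
                  have hs0' : (0:ℝ) ≤ s := by exact_mod_cast hs0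
                  right; left; constructor <;> linarith
    · -- x vertex moved
      rcases hx with ⟨hx1, hx2⟩ | ⟨s, s', hs, hs', hsM, hs'M⟩
      · left; rw [hx1, hx2, esub_bot_right, esub_bot_right]
      · rcases vertex_class hmv φ.y with ⟨hyk, hyv⟩ | ⟨zy, hey, hzyS, hy⟩
        · -- y unmoved
          rcases ereal_cases (v.toFun φ.y) with hybot | hytop | ⟨t, ht⟩
          · left; rw [hyv, hybot, hs, hs', esub_bot_coe, esub_bot_coe]
          · left; rw [hyv, hytop, esub_top_left, esub_top_left]
          · refine Or.inr ⟨t - s, t - s', ?_, ?_, ?_⟩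
            · rw [ht, hs, esub_coe_coe]
            · rw [hyv, ht, hs', esub_coe_coe]
            · rcases hyk with hynone | ⟨w, hw, hwS⟩
              · have ht0 : t = 0 := by
                  rw [hynone, v.zero'] at ht
                  exact_mod_cast ht.symm
                right; right; constructor <;> linarith
              · by_cases hwXF : w ∈ XF
                · have hzxXF : zx ∈ XF := hmv.sub hzxS
                  obtain ⟨hzxXD, hwXD⟩ := hsafe zx w hex hw hzxXF hwXF
                  have hc := hmv.cat zx hzxS hzxXD w hwXD s t s' t
                    (hex ▸ hs) (hw ▸ ht) (hex ▸ hs') (by rw [← hw, hyv, ht])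
                  have := catEq_neg hc
                  rwa [neg_sub, neg_sub] at this
                · have ht0 : (0:EReal) ≤ (t:EReal) := by rw [← ht, hw]; exact v.hist' w hwXF
                  have ht0' : (0:ℝ) ≤ t := by exact_mod_cast ht0
                  right; right; constructor <;> linarith
        · -- y moved as well
          rcases hy with ⟨hy1, hy2⟩ | ⟨r, r', hr, hr', hrM, hr'M⟩
          · left; rw [hy1, hy2, hs, hs', esub_bot_coe, esub_bot_coe]
          · refine Or.inr ⟨r - s, r' - s', ?_, ?_, ?_⟩
            · rw [hr, hs, esub_coe_coe]
            · rw [hr', hs', esub_coe_coe]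
            · by_cases hzz : zy = zx
              · subst hzz
                have h1 : r = s := by
                  have := (hey ▸ hr).symm.trans (hex ▸ hs)
                  exact_mod_cast this
                have h2 : r' = s' := by
                  have := (hey ▸ hr').symm.trans (hex ▸ hs')
                  exact_mod_cast this
                left; rw [h1, h2]; ring
              · have hzyXF : zy ∈ XF := hmv.sub hzyS
                have hzxXF : zx ∈ XF := hmv.sub hzxS
                obtain ⟨hzxXD, hzyXD⟩ := hsafe zx zy hex hey hzxXF hzyXF
                exact hmv.cat zy hzyS hzyXD zx hzxXD r s r' s'
                  (hey ▸ hr) (hex ▸ hs) (hey ▸ hr') (hex ▸ hs')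
  unfold asat at hsat ⊢
  rcases key with h | ⟨d, d', hd, hd', hcat⟩
  · rwa [h]
  · rw [hd] at hsat
    rw [hd']
    exact (catEq_transfer hcat hbdd).mp hsat

end GTA
namespace GTA

variable {C : Type*}

/-- Patch a valuation at clock `x` with the value of `u`. -/
def patchVal (v' u : Val C XF) (x : C) : Val C XF where
  toFun := fun e => if e = some x then u.toFun e else v'.toFun e
  zero' := by
    rw [if_neg (by simp)]
    exact v'.zero'
  hist' := fun z hz => by
    by_cases h : (some z : Option C) = some x
    · rw [if_pos h]; exact u.hist' z hz
    · rw [if_neg h]; exact v'.hist' z hz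
  fut' := fun z hz => by
    by_cases h : (some z : Option C) = some x
    · rw [if_pos h]; exact u.fut' z hz
    · rw [if_neg h]; exact v'.fut' z hz

lemma patchVal_at (v' u : Val C XF) (x : C) :
    (patchVal v' u x).toFun (some x) = u.toFun (some x) := if_pos rfl

lemma patchVal_ne (v' u : Val C XF) (x : C) {z : C} (h : z ≠ x) :
    (patchVal v' u x).toFun (some z) = v'.toFun (some z) :=
  if_neg (by simpa using h)

/-- Pull `v'` back by a time elapse of `δ` on the clocks of `S`, keeping `u` elsewhere. -/
def unshiftVal (u v' : Val C XF) (S : Set C) (δ : ℝ) (hsub : S ⊆ XF) (hδ : 0 ≤ δ) :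
    Val C XF where
  toFun := fun e => match e with
    | none => 0
    | some z => if z ∈ S then eadd (v'.toFun (some z)) ((-δ : ℝ) : EReal)
                else u.toFun (some z)
  zero' := rfl
  hist' := fun z hz => by
    show (0:EReal) ≤ if z ∈ S then _ else _
    rw [if_neg (fun h => hz (hsub h))]
    exact u.hist' z hz
  fut' := fun z hz => by
    show (if z ∈ S then eadd (v'.toFun (some z)) ((-δ : ℝ) : EReal) else u.toFun (some z)) ≤ 0
    by_cases h : z ∈ S
    · rw [if_pos h]
      rcases ereal_le_zero_cases (v'.fut' z (hsub h)) with hb | ⟨r, hr, hr0⟩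
      · rw [hb, eadd_bot_coe]; exact bot_le
      · rw [hr, eadd_coe_coe]
        exact_mod_cast by linarith
    · rw [if_neg h]; exact u.fut' z hz

lemma unshiftVal_mem (u v' : Val C XF) (S : Set C) (δ : ℝ) (hsub : S ⊆ XF) (hδ : 0 ≤ δ)
    {z : C} (hz : z ∈ S) :
    (unshiftVal u v' S δ hsub hδ).toFun (some z)
      = eadd (v'.toFun (some z)) ((-δ : ℝ) : EReal) := if_pos hz

lemma unshiftVal_notMem (u v' : Val C XF) (S : Set C) (δ : ℝ) (hsub : S ⊆ XF) (hδ : 0 ≤ δ)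
    {z : C} (hz : z ∉ S) :
    (unshiftVal u v' S δ hsub hδ).toFun (some z) = u.toFun (some z) := if_neg hz

lemma unshift_eq {u v v' : Val C XF} {S : Set C} {δ : ℝ} (hδ : 0 ≤ δ) (hsub : S ⊆ XF)
    (hvs : v.toFun = shift u.toFun δ)
    (hoff : ∀ x : C, x ∉ S → v'.toFun (some x) = v.toFun (some x)) :
    v'.toFun = shift (unshiftVal u v' S δ hsub hδ).toFun δ := by
  funext e
  cases e with
  | none => rw [v'.zero']; rfl
  | some z =>
    show v'.toFun (some z) = eadd ((unshiftVal u v' S δ hsub hδ).toFun (some z)) ((δ:ℝ):EReal)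
    by_cases h : z ∈ S
    · rw [unshiftVal_mem u v' S δ hsub hδ h]
      rcases ereal_le_zero_cases (v'.fut' z (hsub h)) with hb | ⟨r, hr, _⟩
      · rw [hb, eadd_bot_coe, eadd_bot_coe]
      · rw [hr, eadd_coe_coe, eadd_coe_coe]
        norm_num
    · rw [unshiftVal_notMem u v' S δ hsub hδ h, hoff z h]
      have : v.toFun (some z) = eadd (u.toFun (some z)) ((δ:ℝ):EReal) := by
        rw [hvs]; rfl
      exact this

lemma unshift_mv {XF XD : Set C} {M : ℕ} {u v v' : Val C XF} {S : Set C} {δ : ℝ}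
    (hδ : 0 ≤ δ) (hvs : v.toFun = shift u.toFun δ) (hmv : Mv XF XD M v v' S) :
    Mv XF XD M u (unshiftVal u v' S δ hmv.sub hδ) S := by
  have hval : ∀ z : C, v.toFun (some z) = eadd (u.toFun (some z)) ((δ:ℝ):EReal) := by
    intro z; rw [hvs]; rfl
  constructor
  · exact hmv.sub
  · intro x hx; exact unshiftVal_notMem u v' S δ hmv.sub hδ hx
  · intro z hz hb
    have hvz : v.toFun (some z) = ⊥ := by rw [hval z, hb, eadd_bot_coe]
    rw [unshiftVal_mem u v' S δ hmv.sub hδ hz, hmv.bot z hz hvz, eadd_bot_coe]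
  · intro z hz r hr
    have hvz : v.toFun (some z) = ((r + δ : ℝ) : EReal) := by
      rw [hval z, hr, eadd_coe_coe]
    obtain ⟨r', hr', h1, h2⟩ := hmv.real z hz (r + δ) hvz
    refine ⟨r' - δ, ?_, by linarith, by linarith⟩
    rw [unshiftVal_mem u v' S δ hmv.sub hδ hz, hr', eadd_coe_coe]
    exact_mod_cast (sub_eq_add_neg r' δ).symm
  · intro z hz hzXD w hwXD r rw' r' rw'' hur huw hu'r hu'w
    have hvz : v.toFun (some z) = ((r + δ : ℝ) : EReal) := by
      rw [hval z, hur, eadd_coe_coe]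
    have hvw : v.toFun (some w) = ((rw' + δ : ℝ) : EReal) := by
      rw [hval w, huw, eadd_coe_coe]
    have hv'z : v'.toFun (some z) = ((r' + δ : ℝ) : EReal) := by
      rw [unshiftVal_mem u v' S δ hmv.sub hδ hz] at hu'r
      rcases ereal_le_zero_cases (v'.fut' z (hmv.sub hz)) with hb | ⟨q, hq, _⟩
      · rw [hb, eadd_bot_coe] at hu'r; exact absurd hu'r.symm (EReal.coe_ne_bot _)
      · rw [hq] at hu'r ⊢
        rw [eadd_coe_coe] at hu'r
        have : q - δ = r' := by exact_mod_cast hu'r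
        have : q = r' + δ := by linarith
        exact_mod_cast this
    have hv'w : v'.toFun (some w) = ((rw'' + δ : ℝ) : EReal) := by
      by_cases hw : w ∈ S
      · rw [unshiftVal_mem u v' S δ hmv.sub hδ hw] at hu'w
        rcases ereal_le_zero_cases (v'.fut' w (hmv.sub hw)) with hb | ⟨q, hq, _⟩
        · rw [hb, eadd_bot_coe] at hu'w; exact absurd hu'w.symm (EReal.coe_ne_bot _)
        · rw [hq] at hu'w ⊢
          rw [eadd_coe_coe] at hu'w
          have : q - δ = rw'' := by exact_mod_cast hu'w
          have : q = rw'' + δ := by linarith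
          exact_mod_cast this
      · rw [unshiftVal_notMem u v' S δ hmv.sub hδ hw] at hu'w
        rw [hmv.off w hw, hval w, hu'w, eadd_coe_coe]
    have hc := hmv.cat z hz hzXD w hwXD (r + δ) (rw' + δ) (r' + δ) (rw'' + δ)
      hvz hvw hv'z hv'w
    have e1 : r + δ - (rw' + δ) = r - rw' := by ring
    have e2 : r' + δ - (rw'' + δ) = r' - rw'' := by ring
    rwa [e1, e2] at hc

/-- The master lemma: safely reachable zones are stable under legal moves. -/
theorem mv_mem {XF XD : Set C} {M : ℕ} {Z : Set (Val C XF)} (hZ : SafeReach XF XD M Z) :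
    ∀ (v v' : Val C XF) (S : Set C), v ∈ Z → Mv XF XD M v v' S → v' ∈ Z := by
  induction hZ with
  | init f hf =>
    rintro v v' S ⟨u, hu, δ, hδ, hvs⟩ hmv
    refine ⟨unshiftVal u v' S δ hmv.sub hδ, ?_, δ, hδ, unshift_eq hδ hmv.sub hvs hmv.off⟩
    intro x hx
    rw [unshiftVal_notMem u v' S δ hmv.sub hδ (fun h => hx (hmv.sub h))]
    exact hu x hx
  | elapse h ih =>
    rintro v v' S ⟨u, hu, δ, hδ, hvs⟩ hmv
    exact ⟨unshiftVal u v' S δ hmv.sub hδ,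
      ih u (unshiftVal u v' S δ hmv.sub hδ) S hu (unshift_mv hδ hvs hmv),
      δ, hδ, unshift_eq hδ hmv.sub hvs hmv.off⟩
  | guard g hg h ih =>
    rintro v v' S hv hmv
    exact ⟨ih v v' S hv.1 hmv,
      fun φ hφ => pattern hmv φ (hg φ hφ).1 (hg φ hφ).2 (hv.2 φ hφ)⟩
  | changeSimple x hx h ih =>
    rintro v v' S ⟨u, hu, hrel⟩ hmv
    refine ⟨patchVal v' u x, ih u (patchVal v' u x) (S \ {x}) hu ?_, ?_, ?_⟩
    · constructor
      · exact fun z hz => hmv.sub hz.1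
      · intro z hz
        by_cases hzx : z = x
        · rw [hzx]; exact patchVal_at v' u x
        · have hzS : z ∉ S := fun hzS => hz ⟨hzS, hzx⟩
          rw [patchVal_ne v' u x hzx, hmv.off z hzS, hrel.2 z (by simpa using hzx)]
      · intro z hz hb
        have hzx : z ≠ x := fun h => hz.2 (by simp [h])
        have hvz : v.toFun (some z) = ⊥ := by
          rw [hrel.2 z (by simpa using hzx)]
          exact hb
        rw [patchVal_ne v' u x hzx]
        exact hmv.bot z hz.1 hvz
      · intro z hz r hr
        have hzx : z ≠ x := fun h => hz.2 (by simp [h])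
        have hvz : v.toFun (some z) = (r:EReal) := by
          rw [hrel.2 z (by simpa using hzx)]; exact hr
        obtain ⟨r', hr', h1, h2⟩ := hmv.real z hz.1 r hvz
        exact ⟨r', by rw [patchVal_ne v' u x hzx]; exact hr', h1, h2⟩
      · intro z hz hzXD w hwXD r rw' r' rw'' hur huw hu'r hu'w
        have hzx : z ≠ x := fun h => hz.2 (by simp [h])
        have hwx : w ≠ x := fun h => hx (h ▸ hwXD)
        rw [patchVal_ne v' u x hzx] at hu'r
        rw [patchVal_ne v' u x hwx] at hu'w
        rw [← hrel.2 z (by simpa using hzx)] at hur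
        rw [← hrel.2 w (by simpa using hwx)] at huw
        exact hmv.cat z hz.1 hzXD w hwXD r rw' r' rw'' hur huw hu'r hu'w
    · intro y hy hyXF
      have hyx : y = x := by simpa using hy
      subst hyx
      have hyS : y ∉ S := fun h => hyXF (hmv.sub h)
      rw [hmv.off y hyS]
      exact hrel.1 y (by simp) hyXF
    · intro z hz
      have hzx : z ≠ x := by simpa using hz
      exact (patchVal_ne v' u x hzx).symm
  | changeD x hx cc hc h ih =>
    rintro v v' S ⟨u, hu, hrel⟩ hmv
    refine ⟨patchVal v' u x, ⟨ih u (patchVal v' u x) (S \ {x}) hu.1 ?_,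
      by rw [patchVal_at]; exact hu.2⟩, ?_, ?_⟩
    · constructor
      · exact fun z hz => hmv.sub hz.1
      · intro z hz
        by_cases hzx : z = x
        · rw [hzx]; exact patchVal_at v' u x
        · have hzS : z ∉ S := fun hzS => hz ⟨hzS, hzx⟩
          rw [patchVal_ne v' u x hzx, hmv.off z hzS, hrel.2 z (by simpa using hzx)]
      · intro z hz hb
        have hzx : z ≠ x := fun h => hz.2 (by simp [h])
        have hvz : v.toFun (some z) = ⊥ := by
          rw [hrel.2 z (by simpa using hzx)]
          exact hb
        rw [patchVal_ne v' u x hzx]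
        exact hmv.bot z hz.1 hvz
      · intro z hz r hr
        have hzx : z ≠ x := fun h => hz.2 (by simp [h])
        have hvz : v.toFun (some z) = (r:EReal) := by
          rw [hrel.2 z (by simpa using hzx)]; exact hr
        obtain ⟨r', hr', h1, h2⟩ := hmv.real z hz.1 r hvz
        exact ⟨r', by rw [patchVal_ne v' u x hzx]; exact hr', h1, h2⟩
      · intro z hz hzXD w hwXD r rw' r' rw'' hur huw hu'r hu'w
        have hzx : z ≠ x := fun h => hz.2 (by simp [h])
        by_cases hwx : w = x
        · rcases hc with hc0 | hcb
          · have hrw0 : rw' = 0 := by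
              rw [hwx] at huw
              have h0 : (rw' : EReal) = 0 := huw.symm.trans (hu.2.trans hc0)
              exact_mod_cast h0
            have hrw0' : rw'' = 0 := by
              rw [hwx, patchVal_at] at hu'w
              have h0 : (rw'' : EReal) = 0 := hu'w.symm.trans (hu.2.trans hc0)
              exact_mod_cast h0
            have hvz : v.toFun (some z) = (r:EReal) := by
              rw [hrel.2 z (by simpa using hzx)]; exact hur
            obtain ⟨r'', hr'', h1, h2⟩ := hmv.real z hz.1 r hvz
            have hreq : r' = r'' := by
              rw [patchVal_ne v' u x hzx] at hu'r
              have h0 := hu'r.symm.trans hr''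
              exact_mod_cast h0
            right; left
            rw [hrw0, hrw0', hreq]
            exact ⟨by linarith, by linarith⟩
          · exfalso
            rw [hwx, hu.2, hcb] at huw
            exact (EReal.coe_ne_bot rw') huw.symm
        · rw [patchVal_ne v' u x hzx] at hu'r
          rw [patchVal_ne v' u x hwx] at hu'w
          rw [← hrel.2 z (by simpa using hzx)] at hur
          rw [← hrel.2 w (by simpa using hwx)] at huw
          exact hmv.cat z hz.1 hzXD w hwXD r rw' r' rw'' hur huw hu'r hu'w
    · intro y hy hyXF
      have hyx : y = x := by simpa using hy
      subst hyx
      have hyS : y ∉ S := fun h => hyXF (hmv.sub h)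
      rw [hmv.off y hyS]
      exact hrel.1 y (by simp) hyXF
    · intro z hz
      have hzx : z ≠ x := by simpa using hz
      exact (patchVal_ne v' u x hzx).symm

end GTA
namespace GTA

open Finset

set_option maxHeartbeats 1600000

/-- Existence of a cut `c` and a deep re-placement map `h` for the values of the
`X_D`-clocks: `h` fixes the pattern of `M`-bounded constraints on the deep part
(below `c`), sends `ra` to `α + rb`, and stays below `c`. -/
lemma placement (M m : ℕ) (P : Finset ℝ) (hcard : P.card ≤ m)
    (ra rb α : ℝ) (hra : ra ∈ P) (hrb : rb ≤ 0)
    (hd : ra < rb - m * M) (hα : α < -(m * (M:ℝ))) :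
    ∃ (c : ℝ) (h : ℝ → ℝ),
      ra ≤ c ∧ c < -(M:ℝ) ∧ c + M < rb ∧
      (∀ q ∈ P, c < q → c + M < q) ∧
      h ra = α + rb ∧
      (∀ p ∈ P, p ≤ c → h p ≤ c) ∧
      (∀ p ∈ P, p ≤ c → ∀ q ∈ P, q ≤ c → catEq M (p - q) (h p - h q)) := by
  have hm1 : 1 ≤ m := le_trans (Finset.card_pos.mpr ⟨ra, hra⟩) hcard
  have hM0 : (0:ℝ) ≤ (M:ℝ) := Nat.cast_nonneg M
  set μ := max ra (α + rb) with hμdef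
  have hμ : μ < rb - m * M := by
    apply max_lt hd
    have : α < -((m:ℝ) * M) := hα
    linarith
  set σ := rb - m * M - μ with hσdef
  have hσ : 0 < σ := by simp only [hσdef]; linarith
  set ε := σ / (m + 1) with hεdef
  have hε : 0 < ε := by
    apply div_pos hσ
    positivity
  have hεσ : ε * (m + 1) = σ := by
    rw [hεdef]
    field_simp
  have hmε : (m:ℝ) * ε < σ := by nlinarith
  -- candidate cuts
  set cf : ℕ → ℝ := fun ℓ => μ + ℓ * ((M:ℝ) + ε) with hcf
  have hcf_mono : ∀ {i j : ℕ}, i ≤ j → cf i ≤ cf j := by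
    intro i j hij
    simp only [hcf]
    have : (i:ℝ) ≤ (j:ℝ) := by exact_mod_cast hij
    nlinarith
  set g : ℕ → ℕ := fun ℓ => (P.filter (fun p => ra < p ∧ p ≤ cf ℓ)).card with hg
  have hgood : ∃ ℓ : ℕ, ℓ < m ∧ (∀ q ∈ P, cf ℓ < q → cf ℓ + M < q) ∧ g ℓ ≤ ℓ := by
    by_contra hbad
    have hbad' : ∀ ℓ : ℕ, ℓ < m → (∃ q ∈ P, cf ℓ < q ∧ q ≤ cf ℓ + M) ∨ ℓ < g ℓ := by
      intro ℓ hℓ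
      by_cases h1 : ∃ q ∈ P, cf ℓ < q ∧ q ≤ cf ℓ + M
      · exact Or.inl h1
      · right
        by_contra h2
        push_neg at h1 h2
        exact hbad ⟨ℓ, hℓ, h1, h2⟩
    have key : ∀ ℓ : ℕ, ℓ ≤ m → ℓ ≤ g ℓ := by
      intro ℓ
      induction ℓ with
      | zero => intro _; exact Nat.zero_le _
      | succ ℓ ih =>
        intro hℓ
        have hℓm : ℓ < m := hℓ
        have hmono : P.filter (fun p => ra < p ∧ p ≤ cf ℓ)
            ⊆ P.filter (fun p => ra < p ∧ p ≤ cf (ℓ+1)) := by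
          intro p hp
          obtain ⟨hpP, h1, h2⟩ := Finset.mem_filter.mp hp
          exact Finset.mem_filter.mpr ⟨hpP, h1, h2.trans (hcf_mono (Nat.le_succ ℓ))⟩
        rcases hbad' ℓ hℓm with ⟨q, hqP, hq1, hq2⟩ | hgl
        · have hss : P.filter (fun p => ra < p ∧ p ≤ cf ℓ)
              ⊂ P.filter (fun p => ra < p ∧ p ≤ cf (ℓ+1)) := by
            refine Finset.ssubset_iff_of_subset hmono |>.mpr ⟨q, ?_, ?_⟩
            · refine Finset.mem_filter.mpr ⟨hqP, ?_, ?_⟩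
              · calc ra ≤ μ := le_max_left _ _
                  _ ≤ cf ℓ := by
                    simp only [hcf]
                    nlinarith [Nat.cast_nonneg (α := ℝ) ℓ]
                  _ < q := hq1
              · calc q ≤ cf ℓ + M := hq2
                  _ ≤ cf (ℓ+1) := by
                    simp only [hcf]
                    push_cast
                    nlinarith
            · intro hmem
              have := (Finset.mem_filter.mp hmem).2.2
              linarith
          have hcc := Finset.card_lt_card hss
          have hih := ih (le_of_lt hℓm)
          have e1 : g ℓ = (P.filter (fun p => ra < p ∧ p ≤ cf ℓ)).card := rfl
          have e2 : g (ℓ+1) = (P.filter (fun p => ra < p ∧ p ≤ cf (ℓ+1))).card := rfl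
          omega
        · have hcc := Finset.card_le_card hmono
          have e1 : g ℓ = (P.filter (fun p => ra < p ∧ p ≤ cf ℓ)).card := rfl
          have e2 : g (ℓ+1) = (P.filter (fun p => ra < p ∧ p ≤ cf (ℓ+1))).card := rfl
          omega
    have h1 := key m le_rfl
    have h2 : g m ≤ m - 1 := by
      have hsub : P.filter (fun p => ra < p ∧ p ≤ cf m) ⊆ P.erase ra := by
        intro p hp
        obtain ⟨hpP, hp1, _⟩ := Finset.mem_filter.mp hp
        exact Finset.mem_erase.mpr ⟨ne_of_gt hp1, hpP⟩
      have hcc := (Finset.card_le_card hsub).trans_eq (Finset.card_erase_of_mem hra)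
      have e1 : g m = (P.filter (fun p => ra < p ∧ p ≤ cf m)).card := rfl
      omega
    omega
  obtain ⟨ℓ, hℓm, hwin, hgb⟩ := hgood
  set c := cf ℓ with hcdef
  have hrc : ra ≤ c := by
    calc ra ≤ μ := le_max_left _ _
      _ ≤ c := by
        simp only [hcdef, hcf]
        nlinarith [Nat.cast_nonneg (α := ℝ) ℓ]
  have hℓm' : (ℓ:ℝ) ≤ (m:ℝ) - 1 := by
    have : (ℓ:ℝ) + 1 ≤ (m:ℝ) := by exact_mod_cast hℓm
    linarith
  have hccrb : c + M < rb := by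
    have : c + M ≤ μ + ((m:ℝ) - 1) * ((M:ℝ) + ε) + M := by
      simp only [hcdef, hcf]
      nlinarith [hε, hM0]
    have h2 : μ + ((m:ℝ) - 1) * ((M:ℝ) + ε) + M = μ + m * M + ((m:ℝ) - 1) * ε := by ring
    have h3 : ((m:ℝ) - 1) * ε < σ := by nlinarith
    have h4 : μ + (m:ℝ) * M + σ = rb := by simp only [hσdef]; ring
    linarith
  have hcM : c < -(M:ℝ) := by linarith
  -- the deep part and the ladder
  set SF := P.filter (fun p => p ≤ c) with hSF
  have hraSF : ra ∈ SF := Finset.mem_filter.mpr ⟨hra, hrc⟩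
  set pred : ℝ → ℝ := fun z =>
    if hz : (SF.filter (fun p => p < z)).Nonempty then (SF.filter (fun p => p < z)).max' hz
    else z - 1 with hpreddef
  have pred_spec : ∀ z : ℝ, ∀ y ∈ SF, y < z →
      (pred z ∈ SF ∧ pred z < z ∧ ∀ y' ∈ SF, y' < z → y' ≤ pred z) := by
    intro z y hy hyz
    have hne : (SF.filter (fun p => p < z)).Nonempty :=
      ⟨y, Finset.mem_filter.mpr ⟨hy, hyz⟩⟩
    simp only [hpreddef, dif_pos hne]
    refine ⟨?_, ?_, ?_⟩
    · exact (Finset.mem_filter.mp ((SF.filter (fun p => p < z)).max'_mem hne)).1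
    · exact (Finset.mem_filter.mp ((SF.filter (fun p => p < z)).max'_mem hne)).2
    · intro y' hy' hy'z
      exact Finset.le_max' (SF.filter (fun p => p < z)) y' (Finset.mem_filter.mpr ⟨hy', hy'z⟩)
  set w : ℝ → ℝ := fun z =>
    if ra ≤ pred z then min (z - pred z) ((M:ℝ) + ε) else z - pred z with hwdef
  have w_pos : ∀ z : ℝ, (∃ y ∈ SF, y < z) → 0 < w z := by
    rintro z ⟨y, hy, hyz⟩
    obtain ⟨_, h2, _⟩ := pred_spec z y hy hyz
    simp only [hwdef]
    split_ifs
    · exact lt_min (by linarith) (by linarith)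
    · linarith
  have w_le_gap : ∀ z : ℝ, w z ≤ z - pred z := by
    intro z
    simp only [hwdef]
    split_ifs
    · exact min_le_left _ _
    · exact le_rfl
  have w_le_cap : ∀ z ∈ SF, ra < z → w z ≤ (M:ℝ) + ε := by
    intro z hz hraz
    obtain ⟨_, _, h3⟩ := pred_spec z ra hraSF hraz
    have : ra ≤ pred z := h3 ra hraSF hraz
    simp only [hwdef, if_pos this]
    exact min_le_right _ _
  -- prefix sums
  set F : ℝ → ℝ := fun p => ∑ z ∈ SF.filter (fun z => z ≤ p), w z with hFdef
  set h : ℝ → ℝ := fun p => α + rb - F ra + F p with hhdef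
  have Fdiff : ∀ p q : ℝ, p ≤ q →
      F q - F p = ∑ z ∈ SF.filter (fun z => p < z ∧ z ≤ q), w z := by
    intro p q hpq
    have hsplit : SF.filter (fun z => z ≤ q)
        = SF.filter (fun z => z ≤ p) ∪ SF.filter (fun z => p < z ∧ z ≤ q) := by
      ext z
      simp only [Finset.mem_filter, Finset.mem_union]
      constructor
      · rintro ⟨hz, hzq⟩
        rcases le_or_gt z p with h1 | h1
        · exact Or.inl ⟨hz, h1⟩
        · exact Or.inr ⟨hz, h1, hzq⟩
      · rintro (⟨hz, h1⟩ | ⟨hz, h1, h2⟩)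
        · exact ⟨hz, h1.trans hpq⟩
        · exact ⟨hz, h2⟩
    have hdisj : Disjoint (SF.filter (fun z => z ≤ p)) (SF.filter (fun z => p < z ∧ z ≤ q)) := by
      rw [Finset.disjoint_left]
      intro z hz1 hz2
      have h1 := (Finset.mem_filter.mp hz1).2
      have h2 := (Finset.mem_filter.mp hz2).2.1
      linarith
    simp only [hFdef]
    rw [hsplit, Finset.sum_union hdisj]
    ring
  -- telescoping
  have tele : ∀ (n : ℕ) (p q : ℝ), p ∈ SF → q ∈ SF → p ≤ q →
      (SF.filter (fun z => p < z ∧ z ≤ q)).card = n →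
      ∑ z ∈ SF.filter (fun z => p < z ∧ z ≤ q), (z - pred z) = q - p := by
    intro n
    induction n using Nat.strong_induction_on with
    | _ n ihn =>
      intro p q hp hq hpq hcardn
      rcases eq_or_lt_of_le hpq with rfl | hlt
      · have : SF.filter (fun z => p < z ∧ z ≤ p) = ∅ := by
          apply Finset.filter_false_of_mem
          intro z _
          rintro ⟨h1, h2⟩
          linarith
        rw [this]
        simp
      · obtain ⟨hq'SF, hq'lt, hq'max⟩ := pred_spec q p hp hlt
        have hpq' : p ≤ pred q := hq'max p hp hlt
        have hqmem : q ∈ SF.filter (fun z => p < z ∧ z ≤ q) :=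
          Finset.mem_filter.mpr ⟨hq, hlt, le_rfl⟩
        have hsplit : SF.filter (fun z => p < z ∧ z ≤ q)
            = insert q (SF.filter (fun z => p < z ∧ z ≤ pred q)) := by
          ext z
          simp only [Finset.mem_insert, Finset.mem_filter]
          constructor
          · rintro ⟨hz, h1, h2⟩
            rcases eq_or_lt_of_le h2 with rfl | h2'
            · exact Or.inl rfl
            · exact Or.inr ⟨hz, h1, hq'max z hz h2'⟩
          · rintro (rfl | ⟨hz, h1, h2⟩)
            · exact ⟨hq, hlt, le_rfl⟩
            · exact ⟨hz, h1, h2.trans (le_of_lt hq'lt)⟩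
        have hnotmem : q ∉ SF.filter (fun z => p < z ∧ z ≤ pred q) := by
          intro hmem
          have := (Finset.mem_filter.mp hmem).2.2
          linarith
        have hcard' : (SF.filter (fun z => p < z ∧ z ≤ pred q)).card < n := by
          rw [hsplit, Finset.card_insert_of_notMem hnotmem] at hcardn
          omega
        rw [hsplit, Finset.sum_insert hnotmem,
          ihn _ hcard' p (pred q) hp hq'SF hpq' rfl]
        ring
  have teleAll : ∀ p q : ℝ, p ∈ SF → q ∈ SF → p ≤ q →
      ∑ z ∈ SF.filter (fun z => p < z ∧ z ≤ q), (z - pred z) = q - p :=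
    fun p q hp hq hpq => tele _ p q hp hq hpq rfl
  -- basic sum facts
  have sum_le : ∀ p q : ℝ, p ∈ SF → q ∈ SF → p ≤ q →
      ∑ z ∈ SF.filter (fun z => p < z ∧ z ≤ q), w z ≤ q - p := by
    intro p q hp hq hpq
    calc ∑ z ∈ SF.filter (fun z => p < z ∧ z ≤ q), w z
        ≤ ∑ z ∈ SF.filter (fun z => p < z ∧ z ≤ q), (z - pred z) := by
          apply Finset.sum_le_sum
          intro z _
          exact w_le_gap z
      _ = q - p := teleAll p q hp hq hpq
  have sum_exact : ∀ p q : ℝ, p ∈ SF → q ∈ SF → p ≤ q → q - p ≤ M →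
      ∑ z ∈ SF.filter (fun z => p < z ∧ z ≤ q), w z = q - p := by
    intro p q hp hq hpq hsmall
    rw [← teleAll p q hp hq hpq]
    apply Finset.sum_congr rfl
    intro z hz
    obtain ⟨hzSF, hz1, hz2⟩ := Finset.mem_filter.mp hz
    obtain ⟨_, _, h3⟩ := pred_spec z p hp hz1
    have hppred : p ≤ pred z := h3 p hp hz1
    have hgap : z - pred z ≤ (M:ℝ) := by linarith
    simp only [hwdef]
    split_ifs
    · exact min_eq_left (by linarith)
    · rfl
  have sum_pos : ∀ p q : ℝ, p ∈ SF → q ∈ SF → p < q →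
      0 < ∑ z ∈ SF.filter (fun z => p < z ∧ z ≤ q), w z := by
    intro p q hp hq hpq
    apply Finset.sum_pos
    · intro z hz
      obtain ⟨hzSF, hz1, _⟩ := Finset.mem_filter.mp hz
      exact w_pos z ⟨p, hp, hz1⟩
    · exact ⟨q, Finset.mem_filter.mpr ⟨hq, hpq, le_rfl⟩⟩
  have sum_big : ∀ p q : ℝ, p ∈ SF → q ∈ SF → p ≤ q → (M:ℝ) < q - p →
      (M:ℝ) < ∑ z ∈ SF.filter (fun z => p < z ∧ z ≤ q), w z := by
    intro p q hp hq hpq hbig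
    by_cases hall : ∀ z ∈ SF.filter (fun z => p < z ∧ z ≤ q), w z = z - pred z
    · rw [Finset.sum_congr rfl hall, teleAll p q hp hq hpq]
      exact hbig
    · push_neg at hall
      obtain ⟨z₀, hz₀, hz₀ne⟩ := hall
      have hz₀cap : w z₀ = (M:ℝ) + ε := by
        simp only [hwdef] at hz₀ne ⊢
        split_ifs with hb
        · rcases min_cases (z₀ - pred z₀) ((M:ℝ) + ε) with ⟨he, _⟩ | ⟨he, _⟩
          · exact absurd (by rw [if_pos hb]; exact he) hz₀ne
          · exact he
        · exact absurd rfl (by rw [if_neg hb] at hz₀ne; exact hz₀ne)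
      have hle : w z₀ ≤ ∑ z ∈ SF.filter (fun z => p < z ∧ z ≤ q), w z := by
        apply Finset.single_le_sum (f := w) ?_ hz₀
        intro z hz
        obtain ⟨_, hz1, _⟩ := Finset.mem_filter.mp hz
        exact le_of_lt (w_pos z ⟨p, hp, hz1⟩)
      rw [hz₀cap] at hle
      linarith
  -- difference of h values
  have hdiff : ∀ p q : ℝ, p ≤ q →
      h q - h p = ∑ z ∈ SF.filter (fun z => p < z ∧ z ≤ q), w z := by
    intro p q hpq
    simp only [hhdef]
    have := Fdiff p q hpq
    linarith
  -- stack bound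
  have hstack : ∀ p ∈ SF, h p ≤ c := by
    intro p hpSF
    rcases le_or_gt p ra with hple | hragt
    · have h1 : 0 ≤ h ra - h p := by
        rw [hdiff p ra hple]
        apply Finset.sum_nonneg
        intro z hz
        obtain ⟨_, hz1, _⟩ := Finset.mem_filter.mp hz
        exact le_of_lt (w_pos z ⟨p, hpSF, hz1⟩)
      have h2 : h ra = α + rb := by simp only [hhdef]; ring
      calc h p ≤ h ra := by linarith
        _ = α + rb := h2
        _ ≤ μ := le_max_right _ _
        _ ≤ c := by
          simp only [hcdef, hcf]
          nlinarith [Nat.cast_nonneg (α := ℝ) ℓ]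
    · have h1 : h p - h ra = ∑ z ∈ SF.filter (fun z => ra < z ∧ z ≤ p), w z :=
        hdiff ra p (le_of_lt hragt)
      have h2 : ∑ z ∈ SF.filter (fun z => ra < z ∧ z ≤ p), w z
          ≤ (SF.filter (fun z => ra < z ∧ z ≤ p)).card * ((M:ℝ) + ε) := by
        calc ∑ z ∈ SF.filter (fun z => ra < z ∧ z ≤ p), w z
            ≤ ∑ _z ∈ SF.filter (fun z => ra < z ∧ z ≤ p), ((M:ℝ) + ε) := by
              apply Finset.sum_le_sum
              intro z hz
              obtain ⟨hzSF, hz1, _⟩ := Finset.mem_filter.mp hz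
              exact w_le_cap z hzSF hz1
          _ = (SF.filter (fun z => ra < z ∧ z ≤ p)).card * ((M:ℝ) + ε) := by
              rw [Finset.sum_const, nsmul_eq_mul]
      have h3 : SF.filter (fun z => ra < z ∧ z ≤ p) ⊆ P.filter (fun z => ra < z ∧ z ≤ cf ℓ) := by
        intro z hz
        obtain ⟨hzSF, hz1, hz2⟩ := Finset.mem_filter.mp hz
        obtain ⟨hzP, hzc⟩ := Finset.mem_filter.mp hzSF
        exact Finset.mem_filter.mpr ⟨hzP, hz1, hzc⟩
      have h4 : (SF.filter (fun z => ra < z ∧ z ≤ p)).card ≤ ℓ :=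
        le_trans (Finset.card_le_card h3) hgb
      have h4' : ((SF.filter (fun z => ra < z ∧ z ≤ p)).card : ℝ) ≤ (ℓ:ℝ) := by
        exact_mod_cast h4
      have h5 : h ra = α + rb := by simp only [hhdef]; ring
      have h6 : h p ≤ α + rb + (ℓ:ℝ) * ((M:ℝ) + ε) := by
        nlinarith [hε, hM0]
      calc h p ≤ α + rb + (ℓ:ℝ) * ((M:ℝ) + ε) := h6
        _ ≤ μ + (ℓ:ℝ) * ((M:ℝ) + ε) := by
          have := le_max_right ra (α + rb)
          nlinarith [hε, hM0, Nat.cast_nonneg (α := ℝ) ℓ]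
        _ = c := by simp only [hcdef, hcf]
  -- category preservation
  have hcat : ∀ p ∈ SF, ∀ q ∈ SF, catEq M (p - q) (h p - h q) := by
    have half : ∀ p q : ℝ, p ∈ SF → q ∈ SF → p < q → catEq M (q - p) (h q - h p) := by
      intro p q hp hq hpq
      rcases le_or_gt (q - p) (M:ℝ) with hsmall | hbig
      · left
        rw [hdiff p q (le_of_lt hpq), sum_exact p q hp hq (le_of_lt hpq) hsmall]
      · right; right
        refine ⟨hbig, ?_⟩
        rw [hdiff p q (le_of_lt hpq)]
        exact sum_big p q hp hq (le_of_lt hpq) hbig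
    intro p hp q hq
    rcases lt_trichotomy p q with hlt | rfl | hgt
    · have := catEq_neg (half p q hp hq hlt)
      rwa [neg_sub, neg_sub] at this
    · left; ring
    · exact half q p hq hp hgt
  have hra_eq : h ra = α + rb := by simp only [hhdef]; ring
  refine ⟨c, h, hrc, hcM, hccrb, hwin, hra_eq, ?_, ?_⟩
  · intro p hp hpc
    exact hstack p (Finset.mem_filter.mpr ⟨hp, hpc⟩)
  · intro p hp hpc q hq hqc
    exact hcat p (Finset.mem_filter.mpr ⟨hp, hpc⟩) q (Finset.mem_filter.mpr ⟨hq, hqc⟩)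

end GTA
namespace GTA

variable {C : Type*}

/-- Move the clocks of `T` to the (real) values given by `g`. -/
def moveVal (v : Val C XF) (T : Set C) (hT : T ⊆ XF) (g : C → ℝ)
    (hg : ∀ z ∈ T, g z ≤ 0) : Val C XF where
  toFun := fun e => match e with
    | none => 0
    | some z => if z ∈ T then ((g z : ℝ) : EReal) else v.toFun (some z)
  zero' := rfl
  hist' := fun z hz => by
    show (0:EReal) ≤ if z ∈ T then ((g z : ℝ) : EReal) else v.toFun (some z)
    rw [if_neg (fun h => hz (hT h))]
    exact v.hist' z hz
  fut' := fun z hz => by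
    show (if z ∈ T then ((g z : ℝ) : EReal) else v.toFun (some z)) ≤ 0
    by_cases h : z ∈ T
    · rw [if_pos h]
      exact_mod_cast hg z h
    · rw [if_neg h]
      exact v.fut' z hz

lemma moveVal_some (v : Val C XF) (T : Set C) (hT : T ⊆ XF) (g : C → ℝ)
    (hg : ∀ z ∈ T, g z ≤ 0) (z : C) :
    (moveVal v T hT g hg).toFun (some z)
      = if z ∈ T then ((g z : ℝ) : EReal) else v.toFun (some z) := rfl

lemma moveVal_none (v : Val C XF) (T : Set C) (hT : T ⊆ XF) (g : C → ℝ)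
    (hg : ∀ z ∈ T, g z ≤ 0) :
    (moveVal v T hT g hg).toFun none = 0 := rfl

end GTA

namespace GTA

set_option maxHeartbeats 1600000

/-- in a safely reachable zone, a difference `v(x) - v(y)` of values of
`x, y ∈ X_F ∪ {0}` lying in `(-∞, -nM)` can be changed to any value in `(-∞, -nM)`. -/
theorem diff_change {C : Type*} [Finite C] (XF XD : Set C) (hXD : XD ⊆ XF) (M : ℕ)
    (n : ℕ) (hn : n = max 1 XD.ncard)
    (Z : Set (Val C XF)) (hZ : SafeReach XF XD M Z)
    (v : Val C XF) (hv : v ∈ Z)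
    (a b : Option C) (ha : futV XF a) (hb : futV XF b)
    (hlow : ⊥ < esub (v.toFun a) (v.toFun b))
    (hupp : esub (v.toFun a) (v.toFun b) < ((-(n * M : ℝ) : ℝ) : EReal))
    (α : ℝ) (hα : ((α : ℝ) : EReal) < ((-(n * M : ℝ) : ℝ) : EReal)) :
    ∃ v' ∈ Z, esub (v'.toFun a) (v'.toFun b) = ((α : ℝ) : EReal) := by
  have hn1 : (1:ℕ) ≤ n := by rw [hn]; exact le_max_left _ _
  have hM0 : (0:ℝ) ≤ (M:ℝ) := Nat.cast_nonneg M
  have hMle : (M:ℝ) ≤ (n:ℝ) * M := by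
    have h1 : (1:ℝ) ≤ (n:ℝ) := by exact_mod_cast hn1
    nlinarith
  -- extract real values
  have hble : v.toFun b ≤ 0 := by
    cases b with
    | none => exact le_of_eq v.zero'
    | some z => exact v.fut' z hb
  rcases ereal_le_zero_cases hble with hbbot | ⟨rb, hrb, hrb0⟩
  · rw [hbbot, esub_bot_right] at hupp
    exact absurd hupp (by simp)
  have hale : v.toFun a ≤ 0 := by
    cases a with
    | none => exact le_of_eq v.zero'
    | some z => exact v.fut' z ha
  rcases ereal_le_zero_cases hale with habot | ⟨ra, hra, hra0⟩
  · rw [habot, hrb, esub_bot_coe] at hlow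
    exact absurd hlow (lt_irrefl _)
  rw [hra, hrb, esub_coe_coe] at hupp
  have hdreal : ra - rb < -((n:ℝ) * M) := by exact_mod_cast hupp
  have hαreal : α < -((n:ℝ) * M) := by exact_mod_cast hα
  -- a is a future clock
  cases a with
  | none =>
    exfalso
    have h0 : ra = 0 := by
      have := (v.zero').symm.trans hra
      exact_mod_cast this.symm
    rw [h0] at hdreal
    linarith
  | some za =>
  have haXF : za ∈ XF := ha
  by_cases hza : za ∈ XD
  case neg =>
    -- move `a` alone
    have hT : ({za} : Set C) ⊆ XF := by
      intro z hz
      rw [Set.mem_singleton_iff] at hz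
      rw [hz]; exact haXF
    have hg0 : ∀ z ∈ ({za}:Set C), (fun _ : C => α + rb) z ≤ 0 := fun z _ => by
      simp only
      linarith
    set v' := moveVal v {za} hT (fun _ => α + rb) hg0 with hv'def
    have hmv : Mv XF XD M v v' {za} := by
      constructor
      · exact hT
      · intro x hx
        rw [hv'def, moveVal_some, if_neg hx]
      · intro z hz hbz
        exfalso
        rw [Set.mem_singleton_iff] at hz
        rw [hz, hra] at hbz
        exact EReal.coe_ne_bot ra hbz
      · intro z hz r hr
        rw [Set.mem_singleton_iff] at hz
        subst hz
        have hr' : r = ra := by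
          rw [hra] at hr
          exact_mod_cast hr.symm
        refine ⟨α + rb, ?_, ?_, ?_⟩
        · rw [hv'def, moveVal_some, if_pos (Set.mem_singleton _)]
        · rw [hr']; linarith
        · linarith
      · intro z hz hzXD w hwXD r rw0 r' rw0' h1 h2 h3 h4
        exfalso
        rw [Set.mem_singleton_iff] at hz
        exact hza (hz ▸ hzXD)
    refine ⟨v', mv_mem hZ v v' {za} hv hmv, ?_⟩
    have h1 : v'.toFun (some za) = ((α + rb:ℝ):EReal) := by
      rw [hv'def, moveVal_some, if_pos (Set.mem_singleton _)]
    have h2 : v'.toFun b = (rb:EReal) := by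
      cases b with
      | none =>
        rw [hv'def, moveVal_none, ← v.zero']
        exact hrb
      | some zb =>
        have hzb : zb ∉ ({za} : Set C) := by
          rw [Set.mem_singleton_iff]
          intro he
          rw [he] at hrb
          have : ra = rb := by
            have := hra.symm.trans hrb
            exact_mod_cast this
          rw [this] at hdreal
          nlinarith
        rw [hv'def, moveVal_some, if_neg hzb]
        exact hrb
    rw [h1, h2, esub_coe_coe]
    norm_num
  case pos =>
    have hfinXD : XD.Finite := Set.toFinite XD
    have hm1 : 1 ≤ XD.ncard := (Set.ncard_pos hfinXD).mpr ⟨za, hza⟩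
    have hnm : n = XD.ncard := by rw [hn]; exact max_eq_right hm1
    have hnmR : (n:ℝ) = (XD.ncard:ℝ) := by exact_mod_cast congrArg (fun k : ℕ => (k:ℝ)) hnm
    set D := hfinXD.toFinset with hD
    set P : Finset ℝ := (D.filter (fun z => v.toFun (some z) ≠ ⊥)).image
        (fun z => (v.toFun (some z)).toReal) with hP
    have hPcard : P.card ≤ XD.ncard := by
      calc P.card ≤ (D.filter (fun z => v.toFun (some z) ≠ ⊥)).card := Finset.card_image_le
        _ ≤ D.card := Finset.card_filter_le _ _
        _ = XD.ncard := by rw [hD]; exact (Set.ncard_eq_toFinset_card _ hfinXD).symm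
    have hmemP : ∀ z ∈ XD, ∀ r : ℝ, v.toFun (some z) = (r:EReal) → r ∈ P := by
      intro z hz r hr
      refine Finset.mem_image.mpr ⟨z, Finset.mem_filter.mpr ⟨?_, ?_⟩, ?_⟩
      · exact hfinXD.mem_toFinset.mpr hz
      · rw [hr]; exact EReal.coe_ne_bot r
      · rw [hr]; exact EReal.toReal_coe r
    have hraP : ra ∈ P := hmemP za hza ra hra
    have hdm : ra < rb - (XD.ncard:ℝ) * M := by
      rw [← hnmR]; linarith
    have hαm : α < -((XD.ncard:ℝ) * M) := by
      rw [← hnmR]; linarith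
    obtain ⟨c, hfun, hrc, hcM, hccrb, hwin, hhra, hstack, hcat⟩ :=
      placement M XD.ncard P hPcard ra rb α hraP hrb0 hdm hαm
    set T : Set C := {z | z ∈ XD ∧ v.toFun (some z) ≠ ⊥ ∧ (v.toFun (some z)).toReal ≤ c}
      with hTdef
    have hTXF : T ⊆ XF := fun z hz => hXD hz.1
    have hTreal : ∀ z ∈ T, ∃ r : ℝ, v.toFun (some z) = (r:EReal) ∧ r ∈ P ∧ r ≤ c := by
      intro z hz
      rcases ereal_le_zero_cases (v.fut' z (hTXF hz)) with hbz | ⟨r, hr, _⟩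
      · exact absurd hbz hz.2.1
      · refine ⟨r, hr, hmemP z hz.1 r hr, ?_⟩
        have h0 := hz.2.2
        rw [hr, EReal.toReal_coe] at h0
        exact h0
    set gm : C → ℝ := fun z => hfun ((v.toFun (some z)).toReal) with hgm
    have hg0 : ∀ z ∈ T, gm z ≤ 0 := by
      intro z hz
      obtain ⟨r, hr, hrP, hrc'⟩ := hTreal z hz
      have h0 := hstack r hrP hrc'
      have h1 : gm z = hfun r := by rw [hgm]; simp only; rw [hr, EReal.toReal_coe]
      rw [h1]
      linarith
    set v' := moveVal v T hTXF gm hg0 with hv'def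
    have hv'on : ∀ z ∈ T, ∀ r : ℝ, v.toFun (some z) = (r:EReal) →
        v'.toFun (some z) = ((hfun r : ℝ):EReal) := by
      intro z hz r hr
      rw [hv'def, moveVal_some, if_pos hz]
      have h1 : gm z = hfun r := by rw [hgm]; simp only; rw [hr, EReal.toReal_coe]
      rw [h1]
    have hv'off : ∀ z : C, z ∉ T → v'.toFun (some z) = v.toFun (some z) := fun z hz => by
      rw [hv'def, moveVal_some, if_neg hz]
    have hmv : Mv XF XD M v v' T := by
      constructor
      · exact hTXF
      · exact hv'off
      · intro z hz hbz
        exact absurd hbz hz.2.1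
      · intro z hz r hr
        obtain ⟨r0, hr0, hr0P, hr0c⟩ := hTreal z hz
        have hrr : r = r0 := by
          rw [hr0] at hr
          exact_mod_cast hr.symm
        subst hrr
        refine ⟨hfun r, hv'on z hz r hr, ?_, ?_⟩
        · linarith
        · linarith [hstack r hr0P hr0c]
      · intro z hz hzXD w hwXD r rw0 r' rw0' hvr hvw hv'r hv'w
        have hrP : r ∈ P := hmemP z hzXD r hvr
        have hrwP : rw0 ∈ P := hmemP w hwXD rw0 hvw
        have hrc2 : r ≤ c := by
          have h0 := hz.2.2
          rw [hvr, EReal.toReal_coe] at h0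
          exact h0
        have hr'eq : r' = hfun r := by
          have h0 := hv'r.symm.trans (hv'on z hz r hvr)
          exact_mod_cast h0
        by_cases hwT : w ∈ T
        · have hrwc : rw0 ≤ c := by
            have h0 := hwT.2.2
            rw [hvw, EReal.toReal_coe] at h0
            exact h0
          have hrw'eq : rw0' = hfun rw0 := by
            have h0 := hv'w.symm.trans (hv'on w hwT rw0 hvw)
            exact_mod_cast h0
          rw [hr'eq, hrw'eq]
          exact hcat r hrP hrc2 rw0 hrwP hrwc
        · have hrw'eq : rw0' = rw0 := by
            have h0 := hv'w.symm.trans (hv'off w hwT)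
            rw [hvw] at h0
            exact_mod_cast h0
          have hcw : c < rw0 := by
            by_contra hle
            push_neg at hle
            exact hwT ⟨hwXD, by rw [hvw]; exact EReal.coe_ne_bot _,
              by rw [hvw, EReal.toReal_coe]; exact hle⟩
          have hwinw := hwin rw0 hrwP hcw
          have hstk := hstack r hrP hrc2
          rw [hr'eq, hrw'eq]
          right; left
          constructor
          · linarith
          · linarith
    have hzaT : za ∈ T := ⟨hza, by rw [hra]; exact EReal.coe_ne_bot _,
      by rw [hra, EReal.toReal_coe]; exact hrc⟩
    refine ⟨v', mv_mem hZ v v' T hv hmv, ?_⟩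
    have h1 : v'.toFun (some za) = ((α + rb:ℝ):EReal) := by
      rw [hv'on za hzaT ra hra, hhra]
    have h2 : v'.toFun b = (rb:EReal) := by
      cases b with
      | none =>
        rw [hv'def, moveVal_none, ← v.zero']
        exact hrb
      | some zb =>
        by_cases hzbT : zb ∈ T
        · exfalso
          obtain ⟨r0, hr0, hr0P, hr0c⟩ := hTreal zb hzbT
          have hrbr0 : rb = r0 := by
            rw [hr0] at hrb
            exact_mod_cast hrb.symm
          have hrbc : rb ≤ c := by rw [hrbr0]; exact hr0c
          linarith
        · rw [hv'off zb hzbT]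
          exact hrb
    rw [h1, h2, esub_coe_coe]
    norm_num

end GTA
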